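/- arXiv:1706.03261 — 2 statements merged into one kernel-verified Lean document; each statement's English description precedes it below -/
import Mathlib

section
/- For every r ∈ ℝ, the sublevel set { ({C_i}, μ, Λ) ∈ (ℝ^n)^M × ℝ^n × S_n^{++}(ℝ) : f({C_i}, μ, Λ) ≤ r } is bounded. -/
open Matrix Filter

noncomputable def f (n M : ℕ) (κ ν : ℝ) (Z : Fin M → Fin n → ℝ)
    (D : Fin M → Matrix (Fin n) (Fin n) ℝ) (SN : Fin M → Matrix (Fin n) (Fin n) ℝ)
    (μ0 : Fin n → ℝ) (S0 : Matrix (Fin n) (Fin n) ℝ)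
    (C : Fin M → Fin n → ℝ) (μ : Fin n → ℝ) (Λ : Matrix (Fin n) (Fin n) ℝ) : ℝ :=
  (1/2) * ∑ i, (Z i - (D i).mulVec (C i)) ⬝ᵥ ((SN i)⁻¹).mulVec (Z i - (D i).mulVec (C i))
    - ((ν - n + M)/2) * Real.log Λ.det
    + (1/2) * ∑ i, (C i - μ) ⬝ᵥ Λ.mulVec (C i - μ)
    + (κ/2) * ((μ - μ0) ⬝ᵥ Λ.mulVec (μ - μ0))
    + (1/2) * (ν • S0 * Λ).trace

attribute [local instance] Matrix.normedAddCommGroup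

/-!
Write `a = (ν - n + M) / 2 > 0` and pick `ε > 0` below the spectrum of `S₀`, so that
`tr (S₀ Λ) ≥ ε tr Λ`; with `b = ν ε / 2 > 0` and the data term dropped, `f` dominates
`b tr Λ - a log det Λ` plus the two `Λ`-quadratic forms. In the eigenvalues `λᵢ` of `Λ` this is
`∑ (b λᵢ - a log λᵢ)`, and `t ↦ b t - a log t` is bounded below and tends to `+∞` at `0⁺` and
at `∞`; so on a sublevel set the spectrum of `Λ` lies in a fixed interval `[lo, hi]` with
`lo > 0`. The upper end bounds `Λ`, and `Λ ≥ lo` turns the bounds on the quadratic forms into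
bounds on `μ - μ₀` and `Cᵢ - μ`.
-/

open Real Metric

theorem Real.le_mul_sub_mul_log {a b t : ℝ} (ha : 0 < a) (hb : 0 < b) (ht : 0 < t) :
    a - a * log (a / b) ≤ b * t - a * log t := by
  have hlog : log (b * t / a) ≤ b * t / a - 1 := log_le_sub_one_of_pos (by positivity)
  rw [log_div (by positivity) ha.ne', log_mul hb.ne' ht.ne'] at hlog
  rw [log_div ha.ne' hb.ne']
  have hscale : a * (b * t / a) = b * t := by field_simp
  nlinarith [mul_le_mul_of_nonneg_left hlog ha.le]

theorem Real.exists_bounds_of_mul_sub_mul_log_le {a b : ℝ} (ha : 0 < a) (hb : 0 < b) (K : ℝ) :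
    ∃ lo > 0, ∃ hi, ∀ t > 0, b * t - a * log t ≤ K → lo ≤ t ∧ t ≤ hi := by
  refine ⟨exp (-(K / a)), exp_pos _, 2 * (K - (a - a * log (a / (b / 2)))) / b,
    fun t ht hK => ⟨?_, ?_⟩⟩
  · rw [← exp_log ht, exp_le_exp, neg_le, le_div_iff₀ ha]
    nlinarith [mul_pos hb ht]
  · have := le_mul_sub_mul_log ha (half_pos hb) ht
    rw [le_div_iff₀ hb]
    linarith

theorem pi_norm_le_sqrt_dotProduct_self {ι : Type*} [Fintype ι] (x : ι → ℝ) :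
    ‖x‖ ≤ √(x ⬝ᵥ x) := by
  refine (pi_norm_le_iff_of_nonneg (sqrt_nonneg _)).2 fun i => ?_
  rw [Real.norm_eq_abs, ← sqrt_sq_eq_abs, sq]
  exact sqrt_le_sqrt <| Finset.single_le_sum (f := fun j => x j * x j)
    (fun j _ => mul_self_nonneg _) (Finset.mem_univ i)

namespace Matrix

variable {ι : Type*} [Fintype ι] [DecidableEq ι] {A B : Matrix ι ι ℝ} {a b c : ℝ}

open scoped MatrixOrder in
theorem IsHermitian.posSemidef_sub_smul_one_iff (hA : A.IsHermitian) :
    (A - c • 1).PosSemidef ↔ ∀ i, c ≤ hA.eigenvalues i := by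
  rw [← le_iff, ← Algebra.algebraMap_eq_smul_one, algebraMap_le_iff_le_spectrum hA.isSelfAdjoint,
    hA.spectrum_real_eq_range_eigenvalues, Set.forall_mem_range]

open scoped MatrixOrder in
theorem IsHermitian.posSemidef_smul_one_sub_iff (hA : A.IsHermitian) :
    (c • 1 - A).PosSemidef ↔ ∀ i, hA.eigenvalues i ≤ c := by
  rw [← le_iff, ← Algebra.algebraMap_eq_smul_one, le_algebraMap_iff_spectrum_le hA.isSelfAdjoint,
    hA.spectrum_real_eq_range_eigenvalues, Set.forall_mem_range]

theorem PosDef.exists_pos_sub_smul_one_posSemidef [Nonempty ι] (hA : A.PosDef) :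
    ∃ ε > (0 : ℝ), (A - ε • 1).PosSemidef := by
  obtain ⟨i, hi⟩ := Finite.exists_min hA.1.eigenvalues
  exact ⟨hA.1.eigenvalues i, hA.eigenvalues_pos i, hA.1.posSemidef_sub_smul_one_iff.2 hi⟩

open scoped MatrixOrder in
theorem PosSemidef.trace_mul_nonneg (hA : A.PosSemidef) (hB : B.PosSemidef) :
    0 ≤ (A * B).trace := by
  obtain ⟨X, rfl⟩ := CStarAlgebra.nonneg_iff_eq_star_mul_self.mp hB.nonneg
  rw [← mul_assoc, trace_mul_cycle]
  exact (hA.mul_mul_conjTranspose_same X).trace_nonneg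

theorem PosSemidef.mul_dotProduct_self_le (hA : (A - c • 1).PosSemidef) (x : ι → ℝ) :
    c * (x ⬝ᵥ x) ≤ x ⬝ᵥ A *ᵥ x := by
  have := hA.dotProduct_mulVec_nonneg x
  simp only [star_trivial, sub_mulVec, dotProduct_sub, smul_mulVec, one_mulVec, dotProduct_smul,
    smul_eq_mul] at this
  linarith

theorem PosSemidef.norm_le_sqrt_of_dotProduct_mulVec_le (hc : 0 < c)
    (hA : (A - c • 1).PosSemidef) {x : ι → ℝ} {q : ℝ} (hx : x ⬝ᵥ A *ᵥ x ≤ q) :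
    ‖x‖ ≤ √(q / c) := by
  refine (pi_norm_le_sqrt_dotProduct_self x).trans (sqrt_le_sqrt ?_)
  rw [le_div_iff₀ hc]
  linarith [hA.mul_dotProduct_self_le x]

theorem PosSemidef.abs_apply_le (hA : A.PosSemidef) (i j : ι) :
    |A i j| ≤ (A i i + A j j) / 2 := by
  have hsymm : A j i = A i j := by simpa using congrFun (congrFun hA.1 i) j
  have hplus := hA.dotProduct_mulVec_nonneg (Pi.single i 1 + Pi.single j 1)
  have hminus := hA.dotProduct_mulVec_nonneg (Pi.single i 1 - Pi.single j 1)
  simp [mulVec_add, mulVec_sub, hsymm] at hplus hminus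
  rw [abs_le]
  constructor <;> linarith

theorem PosSemidef.norm_le [Nonempty ι] (hA : A.PosSemidef) (hAc : (c • 1 - A).PosSemidef) :
    ‖A‖ ≤ c := by
  have hdiag i : A i i ≤ c := by simpa using hAc.diag_nonneg (i := i)
  have hc : 0 ≤ c := hA.diag_nonneg.trans (hdiag (Classical.arbitrary ι))
  refine (norm_le_iff hc).2 fun i j => ?_
  rw [Real.norm_eq_abs]
  linarith [hA.abs_apply_le i j, hdiag i, hdiag j]

noncomputable def traceSubLogDet (a b : ℝ) (A : Matrix ι ι ℝ) : ℝ := b * A.trace - a * log A.det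

theorem PosDef.traceSubLogDet_eq_sum (hA : A.PosDef) (a b : ℝ) :
    traceSubLogDet a b A = ∑ i, (b * hA.1.eigenvalues i - a * log (hA.1.eigenvalues i)) := by
  rw [traceSubLogDet, hA.1.trace_eq_sum_eigenvalues, hA.1.det_eq_prod_eigenvalues]
  simp only [RCLike.ofReal_real_eq_id, id]
  rw [log_prod fun i _ => (hA.eigenvalues_pos i).ne', Finset.sum_sub_distrib, Finset.mul_sum,
    Finset.mul_sum]

theorem PosDef.card_mul_le_traceSubLogDet (ha : 0 < a) (hb : 0 < b) (hA : A.PosDef) :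
    Fintype.card ι * (a - a * log (a / b)) ≤ traceSubLogDet a b A := by
  rw [hA.traceSubLogDet_eq_sum]
  simpa using Finset.card_nsmul_le_sum Finset.univ _ _ fun i _ =>
    Real.le_mul_sub_mul_log ha hb (hA.eigenvalues_pos i)

theorem exists_spectrum_bounds_of_traceSubLogDet_le (ha : 0 < a) (hb : 0 < b) (K : ℝ) :
    ∃ lo > (0 : ℝ), ∃ hi : ℝ, ∀ A : Matrix ι ι ℝ, A.PosDef → traceSubLogDet a b A ≤ K →
      (A - lo • 1).PosSemidef ∧ (hi • 1 - A).PosSemidef := by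
  set m := a - a * log (a / b)
  obtain ⟨lo, hlo, hi, hbounds⟩ :=
    Real.exists_bounds_of_mul_sub_mul_log_le ha hb (K - Fintype.card ι * m + m)
  refine ⟨lo, hlo, hi, fun A hA hK => ?_⟩
  have heig i : lo ≤ hA.1.eigenvalues i ∧ hA.1.eigenvalues i ≤ hi := by
    refine hbounds _ (hA.eigenvalues_pos i) ?_
    -- every summand is at least `m`, so a single one is at most `K - (card ι - 1) * m`
    have hterm := Finset.single_le_sum (s := Finset.univ) (fun j _ => sub_nonneg.2
      (Real.le_mul_sub_mul_log ha hb (hA.eigenvalues_pos j))) (Finset.mem_univ i)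
    rw [Finset.sum_sub_distrib, ← hA.traceSubLogDet_eq_sum, Finset.sum_const, Finset.card_univ,
      nsmul_eq_mul] at hterm
    linarith
  exact ⟨hA.1.posSemidef_sub_smul_one_iff.2 fun i => (heig i).1,
    hA.1.posSemidef_smul_one_sub_iff.2 fun i => (heig i).2⟩

end Matrix

theorem traceSubLogDet_add_quadratic_le_f {n M : ℕ} {κ ν ε : ℝ} {Z : Fin M → Fin n → ℝ}
    {D SN : Fin M → Matrix (Fin n) (Fin n) ℝ} {μ0 : Fin n → ℝ} {S0 : Matrix (Fin n) (Fin n) ℝ}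
    {C : Fin M → Fin n → ℝ} {μ : Fin n → ℝ} {Λ : Matrix (Fin n) (Fin n) ℝ} (hν : 0 ≤ ν)
    (hSN : ∀ i, (SN i).PosDef) (hS0 : (S0 - ε • 1).PosSemidef) (hΛ : Λ.PosSemidef) :
    traceSubLogDet ((ν - n + M) / 2) (ν * ε / 2) Λ
        + (1 / 2) * ∑ i, (C i - μ) ⬝ᵥ Λ *ᵥ (C i - μ) + (κ / 2) * ((μ - μ0) ⬝ᵥ Λ *ᵥ (μ - μ0))
      ≤ f n M κ ν Z D SN μ0 S0 C μ Λ := by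
  have hdata : 0 ≤ ∑ i, (Z i - D i *ᵥ C i) ⬝ᵥ (SN i)⁻¹ *ᵥ (Z i - D i *ᵥ C i) :=
    Finset.sum_nonneg fun i _ => by
      simpa using (hSN i).inv.posSemidef.dotProduct_mulVec_nonneg (Z i - D i *ᵥ C i)
  have htrace : ε * Λ.trace ≤ (S0 * Λ).trace := by
    have := hS0.trace_mul_nonneg hΛ
    rwa [sub_mul, smul_mul, one_mul, trace_sub, trace_smul, smul_eq_mul, sub_nonneg] at this
  rw [f, traceSubLogDet, smul_mul, trace_smul, smul_eq_mul]
  nlinarith [mul_le_mul_of_nonneg_left htrace hν]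

theorem f_sublevel_estimates {n M : ℕ} {κ ν ε m r : ℝ} {Z : Fin M → Fin n → ℝ}
    {D SN : Fin M → Matrix (Fin n) (Fin n) ℝ} {μ0 : Fin n → ℝ} {S0 : Matrix (Fin n) (Fin n) ℝ}
    {C : Fin M → Fin n → ℝ} {μ : Fin n → ℝ} {Λ : Matrix (Fin n) (Fin n) ℝ} (hκ : 0 < κ)
    (hν : 0 ≤ ν) (hSN : ∀ i, (SN i).PosDef) (hS0 : (S0 - ε • 1).PosSemidef)
    (hΛ : Λ.PosSemidef) (hm : m ≤ traceSubLogDet ((ν - n + M) / 2) (ν * ε / 2) Λ)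
    (hf : f n M κ ν Z D SN μ0 S0 C μ Λ ≤ r) :
    traceSubLogDet ((ν - n + M) / 2) (ν * ε / 2) Λ ≤ r ∧
      (∀ i, (C i - μ) ⬝ᵥ Λ *ᵥ (C i - μ) ≤ 2 * (r - m)) ∧
      (μ - μ0) ⬝ᵥ Λ *ᵥ (μ - μ0) ≤ 2 * (r - m) / κ := by
  have hlow := (traceSubLogDet_add_quadratic_le_f hν hSN hS0 hΛ).trans hf
  have hQC i : 0 ≤ (C i - μ) ⬝ᵥ Λ *ᵥ (C i - μ) := by
    simpa using hΛ.dotProduct_mulVec_nonneg (C i - μ)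
  have hQμ : 0 ≤ (μ - μ0) ⬝ᵥ Λ *ᵥ (μ - μ0) := by
    simpa using hΛ.dotProduct_mulVec_nonneg (μ - μ0)
  have hsumC : 0 ≤ ∑ i, (C i - μ) ⬝ᵥ Λ *ᵥ (C i - μ) := Finset.sum_nonneg fun i _ => hQC i
  refine ⟨by nlinarith, fun i => ?_, ?_⟩
  · have := Finset.single_le_sum (fun j (_ : j ∈ Finset.univ) => hQC j) (Finset.mem_univ i)
    nlinarith
  · rw [le_div_iff₀ hκ]
    nlinarith

/-- For every `r ∈ ℝ`, the sublevel set
`{({C_i}, μ, Λ) : Λ ∈ S_n^{++}(ℝ), f({C_i}, μ, Λ) ≤ r}` is bounded. -/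
theorem stmt_8 (n M : ℕ) (hn : 1 ≤ n) (hM : 1 ≤ M)
    (κ ν : ℝ) (hκ : 0 < κ) (hν : (n : ℝ) - 1 < ν)
    (Z : Fin M → Fin n → ℝ) (D : Fin M → Matrix (Fin n) (Fin n) ℝ)
    (SN : Fin M → Matrix (Fin n) (Fin n) ℝ) (hSN : ∀ i, (SN i).PosDef)
    (μ0 : Fin n → ℝ) (S0 : Matrix (Fin n) (Fin n) ℝ) (hS0 : S0.PosDef)
    (r : ℝ) :
    Bornology.IsBounded
      {p : (Fin M → Fin n → ℝ) × (Fin n → ℝ) × Matrix (Fin n) (Fin n) ℝ |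
        p.2.2.PosDef ∧ f n M κ ν Z D SN μ0 S0 p.1 p.2.1 p.2.2 ≤ r} := by
  have : Nonempty (Fin n) := Fin.pos_iff_nonempty.mp hn
  have hν0 : 0 < ν := by linarith [show (1 : ℝ) ≤ n by exact_mod_cast hn]
  have ha : 0 < (ν - n + M) / 2 := by linarith [show (1 : ℝ) ≤ M by exact_mod_cast hM]
  obtain ⟨ε, hε, hS0ε⟩ := hS0.exists_pos_sub_smul_one_posSemidef
  have hb : 0 < ν * ε / 2 := by positivity
  obtain ⟨m, hm⟩ : ∃ m, ∀ Λ : Matrix (Fin n) (Fin n) ℝ, Λ.PosDef →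
      m ≤ traceSubLogDet ((ν - n + M) / 2) (ν * ε / 2) Λ :=
    ⟨_, fun Λ hΛ => hΛ.card_mul_le_traceSubLogDet ha hb⟩
  obtain ⟨lo, hlo, hi, hspec⟩ := exists_spectrum_bounds_of_traceSubLogDet_le (ι := Fin n) ha hb r
  refine ((isBounded_closedBall (x := fun _ => μ0)
    (r := √(2 * (r - m) / lo) + √(2 * (r - m) / κ / lo))).prod
    ((isBounded_closedBall (x := μ0) (r := √(2 * (r - m) / κ / lo))).prod
    (isBounded_closedBall (x := 0) (r := hi)))).subset ?_
  rintro ⟨C, μ, Λ⟩ ⟨hΛ, hf⟩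
  obtain ⟨hT, hQC, hQμ⟩ :=
    f_sublevel_estimates hκ hν0.le hSN hS0ε hΛ.posSemidef (hm Λ hΛ) hf
  obtain ⟨hΛlo, hΛhi⟩ := hspec Λ hΛ hT
  have hμ : dist μ μ0 ≤ √(2 * (r - m) / κ / lo) := by
    rw [dist_eq_norm]
    exact hΛlo.norm_le_sqrt_of_dotProduct_mulVec_le hlo hQμ
  have hC i : dist (C i) μ ≤ √(2 * (r - m) / lo) := by
    rw [dist_eq_norm]
    exact hΛlo.norm_le_sqrt_of_dotProduct_mulVec_le hlo (hQC i)
  refine ⟨(dist_pi_le_iff (by positivity)).2 fun i =>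
    (dist_triangle _ μ _).trans (add_le_add (hC i) hμ), hμ, ?_⟩
  simpa using hΛ.posSemidef.norm_le hΛhi
end

section
/- Let (x^l)_{l≥0} be the sequence in (ℝ^n)^M × ℝ^n × S_n^{++}(ℝ) generated by x^{l+1} = G(x^l) from an arbitrary starting point x^0 in the domain. Then the real sequence (f(x^l))_{l≥0} is nonincreasing and converges to a finite limit. -/
open Matrix Filter

/-- The alternating-minimization map `G` on `(ℝⁿ)^M × ℝⁿ × S_n^{++}(ℝ)`. -/
noncomputable def G (n M : ℕ) (κ ν : ℝ) (Z : Fin M → Fin n → ℝ)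
    (D : Fin M → Matrix (Fin n) (Fin n) ℝ) (SN : Fin M → Matrix (Fin n) (Fin n) ℝ)
    (μ0 : Fin n → ℝ) (S0 : Matrix (Fin n) (Fin n) ℝ)
    (x : (Fin M → Fin n → ℝ) × (Fin n → ℝ) × Matrix (Fin n) (Fin n) ℝ) :
    (Fin M → Fin n → ℝ) × (Fin n → ℝ) × Matrix (Fin n) (Fin n) ℝ :=
  let Λ := x.2.2
  let A : Fin M → Matrix (Fin n) (Fin n) ℝ :=
    fun i => Λ⁻¹ * (D i)ᵀ * (D i * Λ⁻¹ * (D i)ᵀ + SN i)⁻¹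
  let μ' : Fin n → ℝ :=
    (κ • (1 : Matrix (Fin n) (Fin n) ℝ) + ∑ i, A i * D i)⁻¹.mulVec
      (∑ i, (A i).mulVec (Z i) + κ • μ0)
  let C' : Fin M → Fin n → ℝ := fun i => (A i).mulVec (Z i - (D i).mulVec μ') + μ'
  let Λ' : Matrix (Fin n) (Fin n) ℝ :=
    ((ν + M - n)⁻¹ • (ν • S0 + κ • vecMulVec (μ' - μ0) (μ' - μ0)
      + ∑ i, vecMulVec (C' i - μ') (C' i - μ')))⁻¹
  (C', μ', Λ')

/-!
For fixed `Λ`, `f` is a convex quadratic function of `(C, μ)`, and the first two components of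
`G` are its stationary point: the Kalman update `Cᵢ = μ + Aᵢ (Zᵢ - Dᵢ μ)` solves the equations in
`Cᵢ`, and the formula for `μ'` then solves the equation in `μ`. So this half-step does not increase
`f`. For fixed `(C, μ)`, `f` is, up to terms free of `Λ`, `½ (tr (S Λ) - a log det Λ)` with `S` the
scatter matrix and `a = ν + M - n > 0`; it is minimised at `Λ = (S / a)⁻¹` because
`tr P - log det P ≥ n` for positive definite `P` (that is, `λ - log λ ≥ 1` on the eigenvalues).
The same inequality bounds `f` from below, so the nonincreasing sequence `f (xˡ)` converges.
-/

namespace Matrix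

variable {m k : Type*} [Fintype m] [DecidableEq m] [Fintype k] [DecidableEq k]

omit [DecidableEq m] in
lemma IsHermitian.dotProduct_mulVec_comm {W : Matrix m m ℝ} (hW : W.IsHermitian) (u v : m → ℝ) :
    u ⬝ᵥ W *ᵥ v = (W *ᵥ u) ⬝ᵥ v := by
  rw [dotProduct_mulVec, ← mulVec_transpose, show Wᵀ = W from hW]

omit [DecidableEq m] in
lemma PosSemidef.tangent_le_dotProduct_mulVec {W : Matrix m m ℝ} (hW : W.PosSemidef)
    (x y : m → ℝ) : y ⬝ᵥ W *ᵥ y + 2 * ((W *ᵥ y) ⬝ᵥ (x - y)) ≤ x ⬝ᵥ W *ᵥ x := by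
  obtain ⟨d, rfl⟩ : ∃ d, x = y + d := ⟨x - y, by abel⟩
  have hd : 0 ≤ d ⬝ᵥ W *ᵥ d := by simpa using hW.dotProduct_mulVec_nonneg d
  have hcross := hW.1.dotProduct_mulVec_comm y d
  rw [add_sub_cancel_left]
  simp only [mulVec_add, dotProduct_add, add_dotProduct, dotProduct_comm d (W *ᵥ y)]
  linarith

lemma PosDef.card_le_trace_sub_log_det {P : Matrix m m ℝ} (hP : P.PosDef) :
    (Fintype.card m : ℝ) ≤ P.trace - Real.log P.det := by
  have hev := hP.eigenvalues_pos
  have hdet : Real.log P.det = ∑ i, Real.log (hP.1.eigenvalues i) := by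
    simp only [hP.1.det_eq_prod_eigenvalues, RCLike.ofReal_real_eq_id, id_eq]
    exact Real.log_prod fun i _ => (hev i).ne'
  rw [hP.1.trace_eq_sum_eigenvalues, hdet, ← Finset.sum_sub_distrib]
  calc (Fintype.card m : ℝ) = ∑ _i : m, (1 : ℝ) := by simp
    _ ≤ _ := Finset.sum_le_sum fun i _ => by
      have := Real.log_le_sub_one_of_pos (hev i)
      simp only [RCLike.ofReal_real_eq_id, id]
      linarith

open scoped MatrixOrder in
lemma PosDef.card_add_log_det_add_log_det_le_trace_mul {B Λ : Matrix m m ℝ} (hB : B.PosDef)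
    (hΛ : Λ.PosDef) : (Fintype.card m : ℝ) + Real.log B.det + Real.log Λ.det ≤ (B * Λ).trace := by
  set R := CFC.sqrt B
  have hRR : R * R = B := CFC.sqrt_mul_sqrt_self B hB.posSemidef.nonneg
  have hRsymm : Rᵀ = R := (CFC.sqrt_nonneg B).posSemidef.1
  have hRdet : R.det * R.det = B.det := by rw [← det_mul, hRR]
  have hRunit : IsUnit R :=
    (isUnit_iff_isUnit_det R).mpr <| isUnit_iff_ne_zero.mpr fun h =>
      hB.det_pos.ne' (by rw [← hRdet, h, zero_mul])
  have hP : (Rᵀ * Λ * R).PosDef :=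
    hΛ.conjTranspose_mul_mul_same (mulVec_injective_iff_isUnit.mpr hRunit)
  have htrace : (Rᵀ * Λ * R).trace = (B * Λ).trace := by
    rw [hRsymm, trace_mul_comm, ← Matrix.mul_assoc, hRR]
  have hdet : (Rᵀ * Λ * R).det = B.det * Λ.det := by
    rw [det_mul, det_mul, det_transpose, ← hRdet]; ring
  have := hP.card_le_trace_sub_log_det
  rw [htrace, hdet, Real.log_mul hB.det_pos.ne' hΛ.det_pos.ne'] at this
  linarith

lemma PosDef.isMinOn_trace_mul_sub_log_det {S : Matrix m m ℝ} (hS : S.PosDef) {a : ℝ} (ha : 0 < a) :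
    IsMinOn (fun Λ : Matrix m m ℝ => (S * Λ).trace - a * Real.log Λ.det) {Λ | Λ.PosDef}
      (a⁻¹ • S)⁻¹ := by
  intro Λ hΛ
  set B := a⁻¹ • S
  have hB : B.PosDef := hS.smul (inv_pos.mpr ha)
  have hSB : S = a • B := by simp [B, smul_smul, ha.ne']
  have hmin : S * B⁻¹ = a • 1 := by
    rw [hSB, smul_mul, mul_nonsing_inv _ hB.det_pos.ne'.isUnit]
  have hlog : Real.log B⁻¹.det = -Real.log B.det := by
    rw [det_nonsing_inv, Ring.inverse_eq_inv, Real.log_inv]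
  have key := hB.card_add_log_det_add_log_det_le_trace_mul hΛ
  have htr : (B * Λ).trace = a⁻¹ * (S * Λ).trace := by simp [B, trace_smul]
  simp only [Set.mem_ofPred_eq, hmin, hlog, trace_smul, trace_one, smul_eq_mul]
  rw [htr] at key
  have := mul_le_mul_of_nonneg_left key ha.le
  rw [← mul_assoc, mul_inv_cancel₀ ha.ne', one_mul] at this
  linarith

omit [DecidableEq k] in
lemma PosDef.mul_inv_mul_transpose_add {Λ : Matrix m m ℝ} {N : Matrix k k ℝ} (hΛ : Λ.PosDef)
    (hN : N.PosDef) (D : Matrix k m ℝ) :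
    (D * Λ⁻¹ * Dᵀ + N).PosDef :=
  PosDef.posSemidef_add (hΛ.inv.posSemidef.mul_mul_conjTranspose_same D) hN

omit [DecidableEq m] in
lemma trace_vecMulVec_self_mul (v : m → ℝ) (Λ : Matrix m m ℝ) :
    (vecMulVec v v * Λ).trace = v ⬝ᵥ Λ *ᵥ v := by
  rw [vecMulVec_mul, trace_vecMulVec, dotProduct_comm, dotProduct_mulVec]

end Matrix

section kalmanGain

variable {m k : Type*} [Fintype m] [DecidableEq m] [Fintype k] [DecidableEq k]

noncomputable def kalmanGain (Λ : Matrix m m ℝ) (D : Matrix k m ℝ) (N : Matrix k k ℝ) :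
    Matrix m k ℝ :=
  Λ⁻¹ * Dᵀ * (D * Λ⁻¹ * Dᵀ + N)⁻¹

variable {Λ : Matrix m m ℝ} {N : Matrix k k ℝ}

lemma mul_kalmanGain (hΛ : Λ.PosDef) (D : Matrix k m ℝ) :
    Λ * kalmanGain Λ D N = Dᵀ * (D * Λ⁻¹ * Dᵀ + N)⁻¹ := by
  rw [kalmanGain, ← Matrix.mul_assoc, ← Matrix.mul_assoc, mul_nonsing_inv _ hΛ.det_pos.ne'.isUnit,
    Matrix.one_mul]

lemma one_sub_mul_kalmanGain (hΛ : Λ.PosDef) (hN : N.PosDef) (D : Matrix k m ℝ) :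
    1 - D * kalmanGain Λ D N = N * (D * Λ⁻¹ * Dᵀ + N)⁻¹ := by
  have hK := (hΛ.mul_inv_mul_transpose_add hN D).det_pos.ne'.isUnit
  rw [kalmanGain, ← mul_nonsing_inv _ hK, ← Matrix.mul_assoc, ← Matrix.mul_assoc, ← Matrix.sub_mul,
    add_sub_cancel_left]

/-- The Kalman update `C = μ + A (Z - D μ)` is the stationary point of
`C ↦ ‖Z - D C‖²_{N⁻¹} + ‖C - μ‖²_Λ`. -/
lemma kalman_update_stationary (hΛ : Λ.PosDef) (hN : N.PosDef) (D : Matrix k m ℝ) (Z : k → ℝ)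
    (μ : m → ℝ) :
    let C := kalmanGain Λ D N *ᵥ (Z - D *ᵥ μ) + μ
    Dᵀ *ᵥ (N⁻¹ *ᵥ (Z - D *ᵥ C)) = Λ *ᵥ (C - μ) := by
  intro C
  have hres : Z - D *ᵥ C = (1 - D * kalmanGain Λ D N) *ᵥ (Z - D *ᵥ μ) := by
    simp only [C, sub_mulVec, one_mulVec, mulVec_add, ← mulVec_mulVec]
    abel
  rw [hres, one_sub_mul_kalmanGain hΛ hN, add_sub_cancel_right, mulVec_mulVec, mulVec_mulVec,
    mulVec_mulVec, Matrix.mul_assoc Dᵀ, nonsing_inv_mul_cancel_left _ _ hN.det_pos.ne'.isUnit,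
    mul_kalmanGain hΛ]

lemma isUnit_det_smul_one_add_sum_kalmanGain_mul {ι : Type*} [Fintype ι] {κ : ℝ} (hκ : 0 < κ)
    (hΛ : Λ.PosDef) (D : ι → Matrix k m ℝ) {N : ι → Matrix k k ℝ} (hN : ∀ i, (N i).PosDef) :
    IsUnit (κ • (1 : Matrix m m ℝ) + ∑ i, kalmanGain Λ (D i) (N i) * D i).det := by
  have hfactor : Λ * (κ • 1 + ∑ i, kalmanGain Λ (D i) (N i) * D i)
      = κ • Λ + ∑ i, (D i)ᵀ * (D i * Λ⁻¹ * (D i)ᵀ + N i)⁻¹ * D i := by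
    simp only [Matrix.mul_add, Matrix.mul_smul, Matrix.mul_one, Finset.mul_sum, ← Matrix.mul_assoc,
      mul_kalmanGain hΛ]
  have hpos : (κ • Λ + ∑ i, (D i)ᵀ * (D i * Λ⁻¹ * (D i)ᵀ + N i)⁻¹ * D i).PosDef :=
    (hΛ.smul hκ).add_posSemidef <| posSemidef_sum _ fun i _ => by
      simpa using ((hΛ.mul_inv_mul_transpose_add (hN i) (D i)).inv.posSemidef
        |>.conjTranspose_mul_mul_same (D i))
  have hdet := hpos.det_pos.ne'
  rw [← hfactor, det_mul] at hdet
  exact (right_ne_zero_of_mul hdet).isUnit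

end kalmanGain

lemma sum_mulVec_sub_eq_smul_sub {ι m k : Type*} [Fintype ι] [Fintype m] [DecidableEq m]
    [Fintype k] (A : ι → Matrix m k ℝ) (D : ι → Matrix k m ℝ) (Z : ι → k → ℝ) (κ : ℝ)
    (μ0 : m → ℝ) (hT : IsUnit (κ • (1 : Matrix m m ℝ) + ∑ i, A i * D i).det) :
    let μ := (κ • (1 : Matrix m m ℝ) + ∑ i, A i * D i)⁻¹ *ᵥ (∑ i, A i *ᵥ Z i + κ • μ0)
    ∑ i, A i *ᵥ (Z i - D i *ᵥ μ) = κ • (μ - μ0) := by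
  intro μ
  have hTμ : (κ • (1 : Matrix m m ℝ) + ∑ i, A i * D i) *ᵥ μ = ∑ i, A i *ᵥ Z i + κ • μ0 := by
    rw [mulVec_mulVec, mul_nonsing_inv _ hT, one_mulVec]
  simp only [add_mulVec, smul_mulVec, one_mulVec, sum_mulVec, ← mulVec_mulVec] at hTμ
  simp only [mulVec_sub, Finset.sum_sub_distrib, smul_sub]
  linear_combination (norm := module) -hTμ

section StationaryPoint

variable {n M : ℕ} {κ ν : ℝ} {Z : Fin M → Fin n → ℝ} {D SN : Fin M → Matrix (Fin n) (Fin n) ℝ}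
  {μ0 : Fin n → ℝ} {S0 : Matrix (Fin n) (Fin n) ℝ}

lemma f_le_of_stationary (hκ : 0 ≤ κ) (hSN : ∀ i, (SN i).PosDef) {Λ : Matrix (Fin n) (Fin n) ℝ}
    (hΛ : Λ.PosDef) {C' : Fin M → Fin n → ℝ} {μ' : Fin n → ℝ}
    (hC : ∀ i, (D i)ᵀ *ᵥ ((SN i)⁻¹ *ᵥ (Z i - D i *ᵥ C' i)) = Λ *ᵥ (C' i - μ'))
    (hμ : ∑ i, (C' i - μ') = κ • (μ' - μ0)) (C : Fin M → Fin n → ℝ) (μ : Fin n → ℝ) :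
    f n M κ ν Z D SN μ0 S0 C' μ' Λ ≤ f n M κ ν Z D SN μ0 S0 C μ Λ := by
  have h1 := Finset.sum_le_sum fun i (_ : i ∈ Finset.univ) =>
    (hSN i).inv.posSemidef.tangent_le_dotProduct_mulVec (Z i - D i *ᵥ C i) (Z i - D i *ᵥ C' i)
  have h2 := Finset.sum_le_sum fun i (_ : i ∈ Finset.univ) =>
    hΛ.posSemidef.tangent_le_dotProduct_mulVec (C i - μ) (C' i - μ')
  have h3 := hΛ.posSemidef.tangent_le_dotProduct_mulVec (μ - μ0) (μ' - μ0)
  have hlin : ∑ i, ((SN i)⁻¹ *ᵥ (Z i - D i *ᵥ C' i)) ⬝ᵥ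
        ((Z i - D i *ᵥ C i) - (Z i - D i *ᵥ C' i))
      + ∑ i, (Λ *ᵥ (C' i - μ')) ⬝ᵥ ((C i - μ) - (C' i - μ'))
      + κ * ((Λ *ᵥ (μ' - μ0)) ⬝ᵥ ((μ - μ0) - (μ' - μ0))) = 0 := by
    have hterm : ∀ i, ((SN i)⁻¹ *ᵥ (Z i - D i *ᵥ C' i)) ⬝ᵥ
          ((Z i - D i *ᵥ C i) - (Z i - D i *ᵥ C' i))
        + (Λ *ᵥ (C' i - μ')) ⬝ᵥ ((C i - μ) - (C' i - μ')) = (Λ *ᵥ (C' i - μ')) ⬝ᵥ (μ' - μ) := by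
      intro i
      rw [sub_sub_sub_cancel_left, ← mulVec_sub, dotProduct_mulVec, ← mulVec_transpose, hC i,
        ← dotProduct_add]
      congr 1
      abel
    rw [← Finset.sum_add_distrib, Finset.sum_congr rfl fun i _ => hterm i, ← sum_dotProduct,
      ← mulVec_sum, hμ, mulVec_smul, smul_dotProduct, smul_eq_mul, ← mul_add, ← dotProduct_add]
    simp
  simp only [Finset.sum_add_distrib, ← Finset.mul_sum] at h1 h2
  simp only [f]
  linarith [mul_le_mul_of_nonneg_left h3 hκ]

lemma G_stationary (hκ : 0 < κ) (hSN : ∀ i, (SN i).PosDef)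
    {x : (Fin M → Fin n → ℝ) × (Fin n → ℝ) × Matrix (Fin n) (Fin n) ℝ} (hΛ : x.2.2.PosDef) :
    let y := G n M κ ν Z D SN μ0 S0 x
    (∀ i, (D i)ᵀ *ᵥ ((SN i)⁻¹ *ᵥ (Z i - D i *ᵥ y.1 i)) = x.2.2 *ᵥ (y.1 i - y.2.1)) ∧
      ∑ i, (y.1 i - y.2.1) = κ • (y.2.1 - μ0) := by
  refine ⟨fun i => kalman_update_stationary hΛ (hSN i) (D i) (Z i) _, ?_⟩
  simp only [G, add_sub_cancel_right]
  exact sum_mulVec_sub_eq_smul_sub _ D Z κ μ0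
    (isUnit_det_smul_one_add_sum_kalmanGain_mul hκ hΛ D hSN)

lemma f_G_fst_le (hκ : 0 < κ) (hSN : ∀ i, (SN i).PosDef)
    {x : (Fin M → Fin n → ℝ) × (Fin n → ℝ) × Matrix (Fin n) (Fin n) ℝ} (hΛ : x.2.2.PosDef) :
    f n M κ ν Z D SN μ0 S0 (G n M κ ν Z D SN μ0 S0 x).1 (G n M κ ν Z D SN μ0 S0 x).2.1 x.2.2
      ≤ f n M κ ν Z D SN μ0 S0 x.1 x.2.1 x.2.2 :=
  have ⟨hC, hμ⟩ := G_stationary hκ hSN hΛ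
  f_le_of_stationary hκ.le hSN hΛ hC hμ x.1 x.2.1

end StationaryPoint

noncomputable def scatterMatrix {n M : ℕ} (κ ν : ℝ) (μ0 : Fin n → ℝ) (S0 : Matrix (Fin n) (Fin n) ℝ)
    (C : Fin M → Fin n → ℝ) (μ : Fin n → ℝ) : Matrix (Fin n) (Fin n) ℝ :=
  ν • S0 + κ • vecMulVec (μ - μ0) (μ - μ0) + ∑ i, vecMulVec (C i - μ) (C i - μ)

section scatterMatrix

variable {n M : ℕ} {κ ν : ℝ} {Z : Fin M → Fin n → ℝ} {D SN : Fin M → Matrix (Fin n) (Fin n) ℝ}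
  {μ0 : Fin n → ℝ} {S0 : Matrix (Fin n) (Fin n) ℝ}

lemma posDef_scatterMatrix (hκ : 0 ≤ κ) (hν : 0 < ν) (hS0 : S0.PosDef) (C : Fin M → Fin n → ℝ)
    (μ : Fin n → ℝ) : (scatterMatrix κ ν μ0 S0 C μ).PosDef :=
  ((hS0.smul hν).add_posSemidef ((posSemidef_vecMulVec_self_star _).smul hκ)).add_posSemidef
    (posSemidef_sum _ fun _ _ => posSemidef_vecMulVec_self_star _)

lemma G_snd_snd (x : (Fin M → Fin n → ℝ) × (Fin n → ℝ) × Matrix (Fin n) (Fin n) ℝ) :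
    (G n M κ ν Z D SN μ0 S0 x).2.2 = ((ν + M - n)⁻¹ • scatterMatrix κ ν μ0 S0
      (G n M κ ν Z D SN μ0 S0 x).1 (G n M κ ν Z D SN μ0 S0 x).2.1)⁻¹ := rfl

lemma f_eq_scatterMatrix (C : Fin M → Fin n → ℝ) (μ : Fin n → ℝ) (Λ : Matrix (Fin n) (Fin n) ℝ) :
    f n M κ ν Z D SN μ0 S0 C μ Λ
      = (1/2) * ∑ i, (Z i - D i *ᵥ C i) ⬝ᵥ (SN i)⁻¹ *ᵥ (Z i - D i *ᵥ C i)
        + (1/2) * ((scatterMatrix κ ν μ0 S0 C μ * Λ).trace - (ν + M - n) * Real.log Λ.det) := by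
  simp only [f, scatterMatrix, Matrix.add_mul, Matrix.smul_mul, Finset.sum_mul, trace_add,
    trace_smul, trace_sum, trace_vecMulVec_self_mul, smul_eq_mul]
  ring

lemma f_inv_smul_scatterMatrix_le (hκ : 0 ≤ κ) (hν : 0 < ν) (ha : 0 < ν + M - n)
    (hS0 : S0.PosDef) (C : Fin M → Fin n → ℝ) (μ : Fin n → ℝ) {Λ : Matrix (Fin n) (Fin n) ℝ}
    (hΛ : Λ.PosDef) :
    f n M κ ν Z D SN μ0 S0 C μ ((ν + M - n)⁻¹ • scatterMatrix κ ν μ0 S0 C μ)⁻¹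
      ≤ f n M κ ν Z D SN μ0 S0 C μ Λ := by
  have hmin := isMinOn_iff.mp
    ((posDef_scatterMatrix (μ0 := μ0) hκ hν hS0 C μ).isMinOn_trace_mul_sub_log_det ha) Λ hΛ
  rw [f_eq_scatterMatrix, f_eq_scatterMatrix]
  linarith

lemma exists_forall_le_f (hκ : 0 ≤ κ) (hν : 0 < ν) (ha : 0 < ν + M - n)
    (hSN : ∀ i, (SN i).PosDef) (hS0 : S0.PosDef) :
    ∃ c, ∀ C μ Λ, Λ.PosDef → c ≤ f n M κ ν Z D SN μ0 S0 C μ Λ := by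
  set S := ν • S0
  refine ⟨(1/2) * ((S * ((ν + M - n)⁻¹ • S)⁻¹).trace
    - (ν + M - n) * Real.log ((ν + M - n)⁻¹ • S)⁻¹.det), fun C μ Λ hΛ => ?_⟩
  have hmin := isMinOn_iff.mp ((hS0.smul hν).isMinOn_trace_mul_sub_log_det ha) Λ hΛ
  have hres : 0 ≤ ∑ i, (Z i - D i *ᵥ C i) ⬝ᵥ (SN i)⁻¹ *ᵥ (Z i - D i *ᵥ C i) :=
    Finset.sum_nonneg fun i _ => by
      simpa using (hSN i).inv.posSemidef.dotProduct_mulVec_nonneg (Z i - D i *ᵥ C i)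
  have hC : 0 ≤ ∑ i, (C i - μ) ⬝ᵥ Λ *ᵥ (C i - μ) :=
    Finset.sum_nonneg fun i _ => by simpa using hΛ.posSemidef.dotProduct_mulVec_nonneg (C i - μ)
  have hμ : 0 ≤ κ * ((μ - μ0) ⬝ᵥ Λ *ᵥ (μ - μ0)) :=
    mul_nonneg hκ (by simpa using hΛ.posSemidef.dotProduct_mulVec_nonneg (μ - μ0))
  simp only [f]
  linarith

lemma f_G_le (hκ : 0 < κ) (hν : 0 < ν) (ha : 0 < ν + M - n) (hSN : ∀ i, (SN i).PosDef)
    (hS0 : S0.PosDef) {x : (Fin M → Fin n → ℝ) × (Fin n → ℝ) × Matrix (Fin n) (Fin n) ℝ}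
    (hΛ : x.2.2.PosDef) :
    f n M κ ν Z D SN μ0 S0 (G n M κ ν Z D SN μ0 S0 x).1 (G n M κ ν Z D SN μ0 S0 x).2.1
        (G n M κ ν Z D SN μ0 S0 x).2.2
      ≤ f n M κ ν Z D SN μ0 S0 x.1 x.2.1 x.2.2 :=
  G_snd_snd x ▸ (f_inv_smul_scatterMatrix_le hκ.le hν ha hS0 _ _ hΛ).trans (f_G_fst_le hκ hSN hΛ)

lemma posDef_G_snd_snd (hκ : 0 ≤ κ) (hν : 0 < ν) (ha : 0 < ν + M - n) (hS0 : S0.PosDef)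
    (x : (Fin M → Fin n → ℝ) × (Fin n → ℝ) × Matrix (Fin n) (Fin n) ℝ) :
    (G n M κ ν Z D SN μ0 S0 x).2.2.PosDef :=
  G_snd_snd x ▸ ((posDef_scatterMatrix hκ hν hS0 _ _).smul (inv_pos.mpr ha)).inv

end scatterMatrix

/-- Along the sequence generated by `x^{l+1} = G(x^l)` from any starting
point in the domain, the real sequence `(f(x^l))` is nonincreasing and converges. -/
theorem stmt_11 (n M : ℕ) (hn : 1 ≤ n) (hM : 1 ≤ M)
    (κ ν : ℝ) (hκ : 0 < κ) (hν : (n : ℝ) - 1 < ν)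
    (Z : Fin M → Fin n → ℝ) (D : Fin M → Matrix (Fin n) (Fin n) ℝ)
    (SN : Fin M → Matrix (Fin n) (Fin n) ℝ) (hSN : ∀ i, (SN i).PosDef)
    (μ0 : Fin n → ℝ) (S0 : Matrix (Fin n) (Fin n) ℝ) (hS0 : S0.PosDef)
    (x : ℕ → (Fin M → Fin n → ℝ) × (Fin n → ℝ) × Matrix (Fin n) (Fin n) ℝ)
    (h0 : (x 0).2.2.PosDef)
    (hrec : ∀ l, x (l + 1) = G n M κ ν Z D SN μ0 S0 (x l)) :
    Antitone (fun l => f n M κ ν Z D SN μ0 S0 (x l).1 (x l).2.1 (x l).2.2) ∧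
    ∃ L : ℝ, Filter.Tendsto
      (fun l => f n M κ ν Z D SN μ0 S0 (x l).1 (x l).2.1 (x l).2.2)
      Filter.atTop (nhds L) := by
  have hν0 : 0 < ν := by linarith [show (1 : ℝ) ≤ n by exact_mod_cast hn]
  have ha : 0 < ν + M - n := by linarith [show (1 : ℝ) ≤ M by exact_mod_cast hM]
  have hΛ : ∀ l, (x l).2.2.PosDef
    | 0 => h0
    | l + 1 => hrec l ▸ posDef_G_snd_snd hκ.le hν0 ha hS0 (x l)
  have hanti : Antitone (fun l => f n M κ ν Z D SN μ0 S0 (x l).1 (x l).2.1 (x l).2.2) :=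
    antitone_nat_of_succ_le fun l => hrec l ▸ f_G_le hκ hν0 ha hSN hS0 (hΛ l)
  obtain ⟨c, hc⟩ := exists_forall_le_f (Z := Z) (D := D) (μ0 := μ0) hκ.le hν0 ha hSN hS0
  exact ⟨hanti, _, tendsto_atTop_ciInf hanti ⟨c, by rintro _ ⟨l, rfl⟩; exact hc _ _ _ (hΛ l)⟩⟩
end
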